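/- arXiv:0910.4450 — 3 statements merged into one kernel-verified Lean document; each statement's English description precedes it below -/
import Mathlib

section
/- Let D ⊂ ℝ^d be a convex set containing 0 and Q an invertible linear map with λD ⊆ Q(D) for some λ > 1. Let p be a positive integer with λ^p ≥ p + 1. Then for every n ∈ ℕ, the Minkowski sum D + Q(D) + Q²(D) + ⋯ + Qⁿ(D) is contained in Qⁿ((p+1)D). -/
open Pointwise

/-!
Since `λ^p ≥ p + 1`, the binomial bound `(1 + 1/p)^p ≤ p + 1` forces `λ ≥ (p + 1)/p`, hence
`(p + 1) D ⊆ p λ D ⊆ p Q(D) = Q(p D)`. Inductively, the partial sum up to `Qⁿ(D)` lies in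
`Qⁿ((p + 1) D)`; adding `Qⁿ⁺¹(D)` and using the step gives
`Qⁿ⁺¹(p D) + Qⁿ⁺¹(D) = Qⁿ⁺¹((p + 1) D)`, as `p D + D = (p + 1) D` for convex `D`.
-/

theorem StarConvex.smul_set_subset_smul_set {𝕜 E : Type*} [Field 𝕜] [LinearOrder 𝕜]
    [IsStrictOrderedRing 𝕜] [AddCommGroup E] [Module 𝕜 E] {s : Set E} (hs : StarConvex 𝕜 0 s)
    {a b : 𝕜} (ha : 0 ≤ a) (hab : a ≤ b) (hb : 0 < b) : a • s ⊆ b • s := by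
  rintro _ ⟨x, hx, rfl⟩
  refine ⟨(a / b) • x, hs.smul_mem hx (by positivity) ((div_le_one hb).2 hab), ?_⟩
  change b • (a / b) • x = a • x
  rw [smul_smul, mul_div_cancel₀ _ hb.ne']

theorem one_add_inv_pow_le_add_one (n : ℕ) : (1 + (n : ℝ)⁻¹) ^ n ≤ n + 1 := by
  rw [add_comm, add_pow]
  calc ∑ k ∈ Finset.range (n + 1), ((n : ℝ)⁻¹) ^ k * 1 ^ (n - k) * n.choose k
      ≤ ∑ _k ∈ Finset.range (n + 1), (1 : ℝ) := by
        refine Finset.sum_le_sum fun k _ => ?_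
        calc ((n : ℝ)⁻¹) ^ k * 1 ^ (n - k) * n.choose k
            ≤ ((n : ℝ)⁻¹) ^ k * n ^ k := by
              rw [one_pow, mul_one]
              gcongr
              exact_mod_cast Nat.choose_le_pow n k
          _ ≤ 1 := by
              rw [← mul_pow]
              exact pow_le_one₀ (by positivity) (inv_mul_le_one_of_le₀ le_rfl n.cast_nonneg)
    _ = n + 1 := by simp

theorem add_one_le_mul_of_add_one_le_pow {p : ℕ} (hp : 0 < p) {lam : ℝ} (hlam : 0 ≤ lam)
    (hpow : (p + 1 : ℝ) ≤ lam ^ p) : (p + 1 : ℝ) ≤ p * lam := by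
  have hp' : (0 : ℝ) < p := by exact_mod_cast hp
  by_contra! hlt
  have hlam_lt : lam < 1 + (p : ℝ)⁻¹ := by
    rwa [← mul_lt_mul_iff_right₀ hp', mul_add, mul_one, mul_inv_cancel₀ hp'.ne']
  have := calc lam ^ p < (1 + (p : ℝ)⁻¹) ^ p := pow_lt_pow_left₀ hlam_lt hlam hp.ne'
    _ ≤ p + 1 := one_add_inv_pow_le_add_one p
  linarith

section

variable {𝕜 E : Type*} [Field 𝕜] [LinearOrder 𝕜] [IsStrictOrderedRing 𝕜] [AddCommGroup E]
  [Module 𝕜 E] {D : Set E} {Q : Module.End 𝕜 E}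

theorem StarConvex.smul_set_subset_image_smul_set (hD : StarConvex 𝕜 0 D) {lam : 𝕜}
    (hsub : lam • D ⊆ Q '' D) {a b : 𝕜} (ha : 0 ≤ a) (hab : a ≤ b * lam) (hblam : 0 < b * lam) :
    a • D ⊆ Q '' (b • D) :=
  calc a • D ⊆ (b * lam) • D := hD.smul_set_subset_smul_set ha hab hblam
    _ = b • lam • D := mul_smul b lam D
    _ ⊆ b • Q '' D := Set.smul_set_mono hsub
    _ = Q '' (b • D) := (image_smul_set Q b D).symm

theorem Convex.sum_image_pow_subset_image_pow_smul (hD : Convex 𝕜 D) (h0 : (0 : E) ∈ D)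
    {c : 𝕜} (hc : 0 ≤ c) (hstep : (c + 1) • D ⊆ Q '' (c • D)) (n : ℕ) :
    ∑ i ∈ Finset.range (n + 1), (Q ^ i) '' D ⊆ (Q ^ n) '' ((c + 1) • D) := by
  induction n with
  | zero =>
    simpa using (hD.starConvex h0).smul_set_subset_smul_set zero_le_one
      (le_add_of_nonneg_left hc) (by positivity)
  | succ n ih =>
    calc ∑ i ∈ Finset.range (n + 2), (Q ^ i) '' D
        = ∑ i ∈ Finset.range (n + 1), (Q ^ i) '' D + (Q ^ (n + 1)) '' D :=
          Finset.sum_range_succ _ _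
      _ ⊆ (Q ^ n) '' (Q '' (c • D)) + (Q ^ (n + 1)) '' D :=
          Set.add_subset_add_right (ih.trans (Set.image_mono hstep))
      _ = (Q ^ (n + 1)) '' (c • D + (1 : 𝕜) • D) := by
          rw [Set.image_add, one_smul, Set.image_image, pow_succ]
          rfl
      _ = (Q ^ (n + 1)) '' ((c + 1) • D) := by rw [hD.add_smul hc zero_le_one]

end

theorem stmt3_general (d : ℕ) (D : Set (Fin d → ℝ)) (hD : Convex ℝ D) (h0 : (0 : Fin d → ℝ) ∈ D)
    (Q : (Fin d → ℝ) →ₗ[ℝ] (Fin d → ℝ))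
    (lam : ℝ) (hlam : 1 < lam) (hsub : lam • D ⊆ Q '' D)
    (p : ℕ) (hp : 0 < p) (hpow : (p + 1 : ℝ) ≤ lam ^ p) (n : ℕ) :
    (∑ i ∈ Finset.range (n + 1), (Q ^ i) '' D) ⊆ (Q ^ n) '' (((p : ℝ) + 1) • D) := by
  have hlam0 : 0 < lam := zero_lt_one.trans hlam
  have hstep : ((p : ℝ) + 1) • D ⊆ Q '' ((p : ℝ) • D) :=
    (hD.starConvex h0).smul_set_subset_image_smul_set hsub (by positivity)
      (add_one_le_mul_of_add_one_le_pow hp hlam0.le hpow) (by positivity)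
  exact hD.sum_image_pow_subset_image_pow_smul h0 p.cast_nonneg hstep n

/-- Under the hypotheses of Statement 2, for every `n` the Minkowski
sum `D + Q(D) + ⋯ + Qⁿ(D)` is contained in `Qⁿ((p+1) • D)`. -/
theorem stmt3 (d : ℕ) (D : Set (Fin d → ℝ)) (hD : Convex ℝ D) (h0 : (0 : Fin d → ℝ) ∈ D)
    (Q : (Fin d → ℝ) →ₗ[ℝ] (Fin d → ℝ)) (hQ : Function.Bijective Q)
    (lam : ℝ) (hlam : 1 < lam) (hsub : lam • D ⊆ Q '' D)
    (p : ℕ) (hp : 0 < p) (hpow : (p + 1 : ℝ) ≤ lam ^ p) (n : ℕ) :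
    (∑ i ∈ Finset.range (n + 1), (Q ^ i) '' D) ⊆ (Q ^ n) '' (((p : ℝ) + 1) • D) :=
  stmt3_general d D hD h0 Q lam hlam hsub p hp hpow n
end

section
/- Let S be a primitive nonnegative m×m matrix, let S' ≤ S with S' ≠ S (entrywise), let q be the Perron–Frobenius eigenvalue of S, and let v ∈ ℝ^m satisfy 0 ≤ v ≤ (1/q) S' v (entrywise). Then v = 0. -/
open Filter Topology Matrix

/-! If `0 ≤ v ≠ 0` and `q v ≤ S' v ≤ S v`, primitivity (`S ^ l > 0`) leaves two cases. Either
`S v = q v`; then `q ^ l v = S ^ l v` is strictly positive, so `(S - S') v ≠ 0`, contradicting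
`S' v = S v`. Or `S v - q v` is nonnegative and nonzero; then `w = S ^ l v > 0` satisfies
`q w < S w` strictly, hence `w ≤ c⁻¹ S w` for some `c > q`. All eigenvalues of `c⁻¹ S` lie in
the open unit disc, so `(c⁻¹ S) ^ n → 0` by Gelfand's formula, and iterating
`w ≤ (c⁻¹ S) ^ n w` gives `w ≤ 0`. -/

theorem spectrum.tendsto_pow_nhds_zero_of_spectralRadius_lt_one {A : Type*} [NormedRing A]
    [NormedAlgebra ℂ A] [CompleteSpace A] {a : A} (ha : spectralRadius ℂ a < 1) :
    Tendsto (a ^ ·) atTop (𝓝 0) := by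
  obtain ⟨r, hρr, hr1⟩ := ENNReal.lt_iff_exists_nnreal_btwn.1 ha
  have hpow : ∀ᶠ n : ℕ in atTop, ‖a ^ n‖ ≤ (r : ℝ) ^ n := by
    filter_upwards [(pow_nnnorm_pow_one_div_tendsto_nhds_spectralRadius a).eventually_lt_const hρr,
      eventually_ge_atTop 1] with n hn hn1
    rw [one_div, ENNReal.rpow_inv_lt_iff (by positivity), ENNReal.rpow_natCast] at hn
    exact_mod_cast hn.le
  exact squeeze_zero_norm' hpow (tendsto_pow_atTop_nhds_zero_of_lt_one r.2 (by exact_mod_cast hr1))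

theorem exists_gt_forall_mul_lt {ι : Type*} [Finite ι] {q : ℝ} {w y : ι → ℝ}
    (h : ∀ i, q * w i < y i) : ∃ c > q, ∀ i, c * w i < y i := by
  have hnear : ∀ᶠ c in 𝓝[>] q, ∀ i, c * w i < y i :=
    nhdsWithin_le_nhds <| eventually_all.2 fun i =>
      (continuous_id.mul continuous_const).continuousAt.eventually_lt continuousAt_const (h i)
  obtain ⟨c, hc, hqc⟩ := (hnear.and self_mem_nhdsWithin).exists
  exact ⟨c, hqc, hc⟩

namespace Matrix

variable {ι : Type*} [Fintype ι] [DecidableEq ι]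

theorem tendsto_smul_pow_nhds_zero_of_forall_isRoot_charpoly (M : Matrix ι ι ℂ) {k : ℂ}
    (hM : ∀ μ, M.charpoly.IsRoot μ → ‖k * μ‖ < 1) :
    Tendsto ((k • M) ^ ·) atTop (𝓝 0) := by
  cases isEmpty_or_nonempty ι
  · exact tendsto_const_nhds.congr fun _ => Subsingleton.elim _ _
  -- The `L∞` operator norm induces the product topology, so this is the statement's `𝓝 0`.
  let := Matrix.linftyOpNormedRing (n := ι) (α := ℂ)
  let := Matrix.linftyOpNormedAlgebra (n := ι) (α := ℂ) (R := ℂ)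
  have : CompleteSpace (Matrix ι ι ℂ) := FiniteDimensional.complete ℂ _
  refine spectrum.tendsto_pow_nhds_zero_of_spectralRadius_lt_one ?_
  have hρ := spectrum.spectralRadius_lt_of_forall_lt (k • M) (r := 1) fun z hz => ?_
  · simpa using hρ
  rw [spectrum.smul_eq_smul _ _ (spectrum.nonempty M)] at hz
  obtain ⟨μ, hμ, rfl⟩ := hz
  exact_mod_cast hM μ (mem_spectrum_iff_isRoot_charpoly.1 hμ)

theorem tendsto_inv_smul_pow_nhds_zero (S : Matrix ι ι ℝ) {q c : ℝ}
    (hq : ∀ μ, (S.map Complex.ofReal).charpoly.IsRoot μ → ‖μ‖ ≤ q) (hqc : q < c) :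
    Tendsto ((c⁻¹ • S) ^ ·) atTop (𝓝 0) := by
  have hM : Tendsto (((c⁻¹ : ℂ) • S.map Complex.ofReal) ^ ·) atTop (𝓝 0) := by
    refine tendsto_smul_pow_nhds_zero_of_forall_isRoot_charpoly _ fun μ hμ => ?_
    have hμq := hq μ hμ
    have hc : 0 < c := (norm_nonneg μ).trans hμq |>.trans_lt hqc
    rw [norm_mul, norm_inv, Complex.norm_real, Real.norm_of_nonneg hc.le, inv_mul_lt_one₀ hc]
    exact hμq.trans_lt hqc
  have hcomplex : ∀ n : ℕ,
      ((c⁻¹ • S) ^ n).map Complex.ofReal = ((c⁻¹ : ℂ) • S.map Complex.ofReal) ^ n := by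
    intro n
    rw [show (Complex.ofReal : ℝ → ℂ) = Complex.ofRealHom from rfl, Matrix.map_pow]
    congr 1
    ext i j
    simp
  have hre := ((continuous_id.matrix_map Complex.continuous_re).tendsto 0).comp hM
  simpa [Function.comp_def, ← hcomplex, Matrix.map_map] using hre

section Order

variable {R : Type*} [Semiring R] [PartialOrder R] {m n : Type*} [Fintype n]

theorem mulVec_mono_of_nonneg [IsOrderedRing R] {A : Matrix m n R} (hA : ∀ i j, 0 ≤ A i j)
    {x y : n → R} (hxy : x ≤ y) : A *ᵥ x ≤ A *ᵥ y := fun i =>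
  Finset.sum_le_sum fun j _ => mul_le_mul_of_nonneg_left (hxy j) (hA i j)

theorem mulVec_apply_pos [IsStrictOrderedRing R] {A : Matrix m n R} {x : n → R}
    (hA : ∀ i j, 0 ≤ A i j) (hx : 0 ≤ x) {i : m} {j : n} (hAij : 0 < A i j) (hxj : 0 < x j) :
    0 < (A *ᵥ x) i :=
  Finset.sum_pos' (fun k _ => mul_nonneg (hA i k) (hx k)) ⟨j, Finset.mem_univ j, mul_pos hAij hxj⟩

theorem mulVec_le_mulVec_of_le [IsOrderedRing R] {A B : Matrix m n R}
    (hAB : ∀ i j, A i j ≤ B i j) {x : n → R} (hx : 0 ≤ x) : A *ᵥ x ≤ B *ᵥ x := fun i =>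
  Finset.sum_le_sum fun j _ => mul_le_mul_of_nonneg_right (hAB i j) (hx j)

end Order

theorem nonpos_of_le_mulVec {A : Matrix ι ι ℝ} (hA : ∀ i j, 0 ≤ A i j)
    (hpow : Tendsto (A ^ ·) atTop (𝓝 0)) {x : ι → ℝ} (hx : x ≤ A *ᵥ x) : x ≤ 0 := by
  have hiter : ∀ n : ℕ, x ≤ A ^ n *ᵥ x := by
    intro n
    induction n with
    | zero => simp
    | succ n ih =>
      rw [pow_succ', ← mulVec_mulVec]
      exact hx.trans (mulVec_mono_of_nonneg hA ih)
  have hlim : Tendsto (fun n : ℕ => A ^ n *ᵥ x) atTop (𝓝 0) := by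
    simpa [Function.comp_def] using
      ((continuous_id.matrix_mulVec continuous_const).tendsto 0).comp hpow
  exact ge_of_tendsto' hlim hiter

theorem nonpos_of_forall_mul_lt_mulVec {S : Matrix ι ι ℝ} (hS : ∀ i j, 0 ≤ S i j) {q : ℝ}
    (hq0 : 0 ≤ q) (hq : ∀ μ, (S.map Complex.ofReal).charpoly.IsRoot μ → ‖μ‖ ≤ q)
    {w : ι → ℝ} (hw : ∀ i, q * w i < (S *ᵥ w) i) : w ≤ 0 := by
  obtain ⟨c, hqc, hc⟩ := exists_gt_forall_mul_lt hw
  have hc0 : 0 < c := hq0.trans_lt hqc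
  refine nonpos_of_le_mulVec (A := c⁻¹ • S)
    (fun i j => smul_nonneg (inv_nonneg.2 hc0.le) (hS i j))
    (tendsto_inv_smul_pow_nhds_zero S hq hqc) fun i => ?_
  rw [smul_mulVec, Pi.smul_apply, smul_eq_mul, le_inv_mul_iff₀ hc0]
  exact (hc i).le

theorem pow_mulVec_eq_smul_of_mulVec_eq_smul {S : Matrix ι ι ℝ} {q : ℝ} {v : ι → ℝ}
    (heig : S *ᵥ v = q • v) (n : ℕ) : S ^ n *ᵥ v = q ^ n • v := by
  induction n with
  | zero => simp
  | succ n ih => rw [pow_succ', ← mulVec_mulVec, ih, mulVec_smul, heig, smul_smul, pow_succ]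

theorem pos_of_mulVec_eq_smul {S : Matrix ι ι ℝ} {l : ℕ} (hl : ∀ i j, 0 < (S ^ l) i j) {q : ℝ}
    {v : ι → ℝ} (hv : 0 ≤ v) {j : ι} (hj : 0 < v j) (heig : S *ᵥ v = q • v) (i : ι) :
    0 < v i := by
  have hpos := mulVec_apply_pos (fun i j => (hl i j).le) hv (hl i j) hj
  rw [pow_mulVec_eq_smul_of_mulVec_eq_smul heig, Pi.smul_apply, smul_eq_mul] at hpos
  exact (hv i).lt_of_ne fun h => by simp [← h] at hpos

theorem forall_mul_lt_mulVec_pow_mulVec {S : Matrix ι ι ℝ} {l : ℕ} (hl : ∀ i j, 0 < (S ^ l) i j)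
    {q : ℝ} {v : ι → ℝ} (hsup : q • v ≤ S *ᵥ v) (hne : S *ᵥ v ≠ q • v) (i : ι) :
    q * (S ^ l *ᵥ v) i < (S *ᵥ (S ^ l *ᵥ v)) i := by
  obtain ⟨k, hk⟩ : ∃ k, 0 < (S *ᵥ v - q • v) k := by
    by_contra! h
    exact hne (le_antisymm (fun k => sub_nonpos.1 (h k)) hsup)
  have hcomm : S *ᵥ (S ^ l *ᵥ v) - q • (S ^ l *ᵥ v) = S ^ l *ᵥ (S *ᵥ v - q • v) := by
    rw [mulVec_sub, mulVec_smul, mulVec_mulVec, mulVec_mulVec, ← pow_succ, pow_succ']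
  have hpos := mulVec_apply_pos (fun i j => (hl i j).le) (sub_nonneg.2 hsup) (hl i k) hk
  rw [← hcomm, Pi.sub_apply, Pi.smul_apply, smul_eq_mul, sub_pos] at hpos
  exact hpos

end Matrix

theorem stmt9_general (m : ℕ) (S S' : Matrix (Fin m) (Fin m) ℝ)
    (hnn : ∀ i j, 0 ≤ S i j)
    (hprim : ∃ l : ℕ, ∀ i j, 0 < (S ^ l) i j)
    (hnn' : ∀ i j, 0 ≤ S' i j)
    (hle : ∀ i j, S' i j ≤ S i j)
    (hne : S' ≠ S)
    (q : ℝ)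
    (hq_max : ∀ μ : ℂ, ((S.map (Complex.ofReal)).charpoly).IsRoot μ → ‖μ‖ ≤ q)
    (v : Fin m → ℝ)
    (hv0 : ∀ i, 0 ≤ v i)
    (hv : ∀ i, v i ≤ q⁻¹ * S'.mulVec v i) :
    v = 0 := by
  by_contra hv_ne
  obtain ⟨j, hj⟩ : ∃ j, 0 < v j := by
    by_contra! h
    exact hv_ne (funext fun i => le_antisymm (h i) (hv0 i))
  have hq : 0 < q := by
    by_contra! hq
    have hS'v_nonneg : 0 ≤ (S' *ᵥ v) j := by
      simpa using mulVec_mono_of_nonneg (x := 0) hnn' hv0 j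
    linarith [hv j, mul_nonpos_of_nonpos_of_nonneg (inv_nonpos.2 hq) hS'v_nonneg]
  have hqv : q • v ≤ S' *ᵥ v := fun i => by
    simpa [← le_inv_mul_iff₀ hq] using hv i
  have hS'v : S' *ᵥ v ≤ S *ᵥ v := mulVec_le_mulVec_of_le hle hv0
  obtain ⟨l, hl⟩ := hprim
  by_cases heig : S *ᵥ v = q • v
  · obtain ⟨i₀, j₀, hlt⟩ : ∃ i j, S' i j < S i j := by
      by_contra! h
      exact hne (Matrix.ext fun i j => le_antisymm (hle i j) (h i j))
    have hpos := mulVec_apply_pos (A := S - S') (fun i j => sub_nonneg.2 (hle i j)) hv0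
      (sub_pos.2 hlt) (pos_of_mulVec_eq_smul hl hv0 hj heig j₀)
    rw [sub_mulVec, le_antisymm hS'v (heig ▸ hqv), sub_self] at hpos
    exact lt_irrefl _ hpos
  · have hw := nonpos_of_forall_mul_lt_mulVec hnn hq.le hq_max
      (forall_mul_lt_mulVec_pow_mulVec hl (hqv.trans hS'v) heig) j
    exact hw.not_gt (mulVec_apply_pos (fun i j => (hl i j).le) hv0 (hl j j) hj)

/-- Let `S` be a primitive nonnegative `m×m` matrix with
Perron–Frobenius eigenvalue `q`, let `S' ≤ S` entrywise with `S' ≠ S` and `S'`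
nonnegative, and let `v` satisfy `0 ≤ v ≤ (1/q) S' v` entrywise. Then `v = 0`. -/
theorem stmt9 (m : ℕ) (S S' : Matrix (Fin m) (Fin m) ℝ)
    (hnn : ∀ i j, 0 ≤ S i j)
    (hprim : ∃ l : ℕ, ∀ i j, 0 < (S ^ l) i j)
    (hnn' : ∀ i j, 0 ≤ S' i j)
    (hle : ∀ i j, S' i j ≤ S i j)
    (hne : S' ≠ S)
    (q : ℝ)
    (hq_eig : ((S.map (Complex.ofReal)).charpoly).IsRoot (q : ℂ))
    (hq_max : ∀ μ : ℂ, ((S.map (Complex.ofReal)).charpoly).IsRoot μ → ‖μ‖ ≤ q)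
    (v : Fin m → ℝ)
    (hv0 : ∀ i, 0 ≤ v i)
    (hv : ∀ i, v i ≤ q⁻¹ * S'.mulVec v i) :
    v = 0 :=
  stmt9_general m S S' hnn hprim hnn' hle hne q hq_max v hv0 hv
end

section
/- Let G be a compact topological group with normalized Haar measure μ, let L be a dense subgroup of G, and let Λ_1,…,Λ_m be pairwise disjoint subsets of L. Set W_i = closure of Λ_i in G and Γ_i = W_i ∩ L. If μ(closure(Γ_i \ Λ_i)) = 0 for all i ≤ m, and every nonempty open subset of G has positive Haar measure (which holds automatically), then int(W_i) ∩ int(W_j) = ∅ for all i ≠ j. -/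
open MeasureTheory

/-! Inside `int W_i ∩ int W_j`, every point of the dense set `L` lies in `Γ_i` and `Γ_j` but, by
disjointness, outside `Λ_i` or outside `Λ_j`. So this open set lies in the closure of
`(Γ_i \ Λ_i) ∪ (Γ_j \ Λ_j)`, a null set, and an open null set is empty when nonempty open sets
have positive measure. -/

section Topology

variable {X : Type*} [TopologicalSpace X] {D A B : Set X}

theorem inter_interior_closure_inter_subset_union_diff (hAB : Disjoint A B) :
    interior (closure A) ∩ interior (closure B) ∩ D ⊆
      (closure A ∩ D) \ A ∪ (closure B ∩ D) \ B := by
  rintro x ⟨⟨hxA, hxB⟩, hxD⟩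
  by_cases hx : x ∈ A
  · exact Or.inr ⟨⟨interior_subset hxB, hxD⟩, hAB.notMem_of_mem_left hx⟩
  · exact Or.inl ⟨⟨interior_subset hxA, hxD⟩, hx⟩

theorem Dense.inter_interior_closure_subset_closure_union_diff (hD : Dense D)
    (hAB : Disjoint A B) :
    interior (closure A) ∩ interior (closure B) ⊆
      closure ((closure A ∩ D) \ A) ∪ closure ((closure B ∩ D) \ B) :=
  calc interior (closure A) ∩ interior (closure B)
      ⊆ closure (interior (closure A) ∩ interior (closure B) ∩ D) :=
        hD.open_subset_closure_inter (isOpen_interior.inter isOpen_interior)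
    _ ⊆ closure ((closure A ∩ D) \ A ∪ (closure B ∩ D) \ B) :=
        closure_mono (inter_interior_closure_inter_subset_union_diff hAB)
    _ = closure ((closure A ∩ D) \ A) ∪ closure ((closure B ∩ D) \ B) := closure_union

end Topology

theorem stmt15_general (G : Type*) [Group G] [TopologicalSpace G]
    [MeasurableSpace G]
    (μ : Measure G)
    (hopen : ∀ U : Set G, IsOpen U → U.Nonempty → 0 < μ U)
    (m : ℕ) (L : Subgroup G) (hdense : Dense (L : Set G))
    (Λ : Fin m → Set G)
    (hdisj : ∀ i j : Fin m, i ≠ j → Disjoint (Λ i) (Λ j))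
    (hnull : ∀ i : Fin m, μ (closure ((closure (Λ i) ∩ (L : Set G)) \ Λ i)) = 0)
    (i j : Fin m) (hij : i ≠ j) :
    interior (closure (Λ i)) ∩ interior (closure (Λ j)) = ∅ := by
  have hzero : μ (interior (closure (Λ i)) ∩ interior (closure (Λ j))) = 0 :=
    measure_mono_null (hdense.inter_interior_closure_subset_closure_union_diff (hdisj i j hij))
      (measure_union_null (hnull i) (hnull j))
  by_contra hne
  exact (hopen _ (isOpen_interior.inter isOpen_interior)
    (Set.nonempty_iff_ne_empty.2 hne)).ne' hzero

/-- Let `G` be a compact group with normalized Haar measure `μ`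
(every nonempty open set having positive measure), `L` a dense subgroup, and
`Λ_1,…,Λ_m ⊆ L` pairwise disjoint with `μ(closure(Γ_i \ Λ_i)) = 0` where
`W_i = closure Λ_i`, `Γ_i = W_i ∩ L`. Then `int W_i ∩ int W_j = ∅` for `i ≠ j`. -/
theorem stmt15 (G : Type*) [Group G] [TopologicalSpace G] [IsTopologicalGroup G]
    [CompactSpace G] [MeasurableSpace G] [BorelSpace G]
    (μ : Measure G) [μ.IsHaarMeasure] [IsProbabilityMeasure μ]
    (hopen : ∀ U : Set G, IsOpen U → U.Nonempty → 0 < μ U)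
    (m : ℕ) (L : Subgroup G) (hdense : Dense (L : Set G))
    (Λ : Fin m → Set G) (hsub : ∀ i, Λ i ⊆ (L : Set G))
    (hdisj : ∀ i j : Fin m, i ≠ j → Disjoint (Λ i) (Λ j))
    (hnull : ∀ i : Fin m, μ (closure ((closure (Λ i) ∩ (L : Set G)) \ Λ i)) = 0)
    (i j : Fin m) (hij : i ≠ j) :
    interior (closure (Λ i)) ∩ interior (closure (Λ j)) = ∅ :=
  stmt15_general G μ hopen m L hdense Λ hdisj hnull i j hij
end
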